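/- For every q-ary DMC W (q = 2^r) and every j with 1 ≤ j ≤ r−1: Z_max^{(r−j)}(W⁻) ≤ Σ_{l=1}^{j} (q/2^l)·Z_max^{(r−l+1)}(W) + (q/2^j)·Z_max^{(r−j)}(W), i.e. Z_max^{(r−j)}(W⁻) ≤ (q/2)·Z_max^{(r)}(W) + (q/4)·Z_max^{(r−1)}(W) + ⋯ + (q/2^j)·Z_max^{(r−j+1)}(W) + (q/2^j)·Z_max^{(r−j)}(W). -/

import Mathlib

open Finset

instance (r : ℕ) : NeZero (2 ^ r) := ⟨pow_ne_zero r two_ne_zero⟩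

/-- The Bhattacharyya parameter `Z(W; x, x') = ∑_y √(W x y · W x' y)` of a pair of inputs. -/
noncomputable def bhat {q : ℕ} {Y : Type*} [Fintype Y] (W : ZMod q → Y → ℝ) (x x' : ZMod q) : ℝ :=
  ∑ y, Real.sqrt (W x y * W x' y)

/-- `Z_v(W) = (1/q) ∑_x Z(W; x, x+v)`. -/
noncomputable def Zv {q : ℕ} [NeZero q] {Y : Type*} [Fintype Y] (W : ZMod q → Y → ℝ) (v : ZMod q) : ℝ :=
  (1 / (q : ℝ)) * ∑ x, bhat W x (x + v)

/-- `W` is a discrete memoryless channel: nonnegative entries and rows summing to one. -/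
def IsDMC {q : ℕ} {Y : Type*} [Fintype Y] (W : ZMod q → Y → ℝ) : Prop :=
  (∀ x y, 0 ≤ W x y) ∧ ∀ x, ∑ y, W x y = 1

/-- The ordered weight `wt(v) = r - ν₂(v̄)` of `v : ZMod (2^r)`. -/
def owt (r : ℕ) {q : ℕ} (v : ZMod q) : ℕ := r - padicValNat 2 v.val

/-- The `i`-th average Bhattacharyya distance `Z_i(W) = 2^{-(i-1)} ∑_{v ∈ X_i} Z_v(W)`. -/
noncomputable def Zi (r : ℕ) {Y : Type*} [Fintype Y] (W : ZMod (2 ^ r) → Y → ℝ) (i : ℕ) : ℝ :=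
  (1 / 2 ^ (i - 1) : ℝ) *
    ∑ v ∈ univ.filter (fun v : ZMod (2 ^ r) => v ≠ 0 ∧ owt r v = i), Zv W v

/-- The symmetric capacity `I(W)` (with `0 log 0 = 0`). -/
noncomputable def symCap {q : ℕ} [NeZero q] {Y : Type*} [Fintype Y] (W : ZMod q → Y → ℝ) : ℝ :=
  ∑ x, ∑ y, (1 / (q : ℝ)) * W x y *
    Real.logb 2 (W x y / ∑ x', (1 / (q : ℝ)) * W x' y)

/-- `Z_max^{(j)}(W) = max_{v ∈ X_j} Z_v(W)` (as a supremum over the finite nonempty class `X_j`). -/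
noncomputable def Zmax (r : ℕ) {Y : Type*} [Fintype Y] (W : ZMod (2 ^ r) → Y → ℝ) (j : ℕ) : ℝ :=
  ⨆ v : {v : ZMod (2 ^ r) // v ≠ 0 ∧ owt r v = j}, Zv W v.1

/-- The Arıkan minus transform `W⁻ u₁ (y₁,y₂) = (1/q) ∑_{u₂} W (u₁+u₂) y₁ · W u₂ y₂`. -/
noncomputable def Wminus {q : ℕ} [NeZero q] {Y : Type*} [Fintype Y] (W : ZMod q → Y → ℝ) :
    ZMod q → Y × Y → ℝ :=
  fun u₁ p => (1 / (q : ℝ)) * ∑ u₂, W (u₁ + u₂) p.1 * W u₂ p.2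

/-- The Arıkan plus transform `W⁺ u₂ (y₁,y₂,u₁) = (1/q) W (u₁+u₂) y₁ · W u₂ y₂`. -/
noncomputable def Wplus {q : ℕ} [NeZero q] {Y : Type*} [Fintype Y] (W : ZMod q → Y → ℝ) :
    ZMod q → Y × Y × ZMod q → ℝ :=
  fun u₂ p => (1 / (q : ℝ)) * W (p.2.2 + u₂) p.1 * W u₂ p.2.1

/-- The restricted channel `W^{[r-k]}` for the `r-k` least significant bits. -/
noncomputable def Wres (r k : ℕ) {Y : Type*} [Fintype Y] (W : ZMod (2 ^ r) → Y → ℝ) :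
    ZMod (2 ^ (r - k)) → Y → ℝ :=
  fun u y => (1 / 2 ^ k : ℝ) *
    ∑ x ∈ univ.filter (fun x : ZMod (2 ^ r) => x.val % 2 ^ (r - k) = u.val), W x y

/-!
Expanding `W⁻` and using subadditivity of the square root gives
`Z_v(W⁻) ≤ ∑_d Z_d(W) Z_{v+d}(W)`. If `v` has 2-adic valuation exactly `j`, split the sum over
`d` into the shells `2^t ℤ/q \ 2^{t+1} ℤ/q` (`t < j`) and the subgroup `2^j ℤ/q`. On a shell,
`Z_d(W) ≤ Z_max^{(r-t)}(W)` bounds the term since `Z_{v+d}(W) ≤ 1`, and the shell has `q/2^{t+1}`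
elements. On `2^j ℤ/q`, which has `q/2^j` elements, one of `d` and `v + d` has valuation exactly
`j`: `d` itself unless `2^{j+1} ∣ d`, in which case `v + d` does.
-/

lemma Real.sqrt_sum_le_sum_sqrt {ι : Type*} (s : Finset ι) (f : ι → ℝ) (hf : ∀ i ∈ s, 0 ≤ f i) :
    √(∑ i ∈ s, f i) ≤ ∑ i ∈ s, √(f i) := by
  rw [Real.sqrt_le_left (sum_nonneg fun i _ => Real.sqrt_nonneg _)]
  calc ∑ i ∈ s, f i = ∑ i ∈ s, √(f i) ^ 2 := sum_congr rfl fun i hi => (Real.sq_sqrt (hf i hi)).symm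
    _ ≤ (∑ i ∈ s, √(f i)) ^ 2 := sum_sq_le_sq_sum_of_nonneg fun i _ => Real.sqrt_nonneg _

lemma Real.sqrt_sum_mul_sum_le {ι κ : Type*} [Fintype ι] [Fintype κ] (f : ι → ℝ) (g : κ → ℝ)
    (hf : ∀ i, 0 ≤ f i) (hg : ∀ k, 0 ≤ g k) :
    √((∑ i, f i) * ∑ k, g k) ≤ ∑ i, ∑ k, √(f i * g k) := by
  have hfg : ∀ i k, 0 ≤ f i * g k := fun i k => mul_nonneg (hf i) (hg k)
  rw [sum_mul_sum]
  refine (Real.sqrt_sum_le_sum_sqrt _ _ fun i _ => sum_nonneg fun k _ => hfg i k).trans ?_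
  exact sum_le_sum fun i _ => Real.sqrt_sum_le_sum_sqrt _ _ fun k _ => hfg i k

section Bhattacharyya

variable {q : ℕ} {Y : Type*} [Fintype Y] {W : ZMod q → Y → ℝ}

lemma bhat_nonneg (W : ZMod q → Y → ℝ) (x x' : ZMod q) : 0 ≤ bhat W x x' :=
  sum_nonneg fun _ _ => Real.sqrt_nonneg _

lemma bhat_le_one (hW : IsDMC W) (x x' : ZMod q) : bhat W x x' ≤ 1 := by
  calc bhat W x x' ≤ ∑ y, (W x y + W x' y) / 2 := by
        refine sum_le_sum fun y _ => ?_
        rw [Real.sqrt_mul (hW.1 x y)]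
        nlinarith [Real.sq_sqrt (hW.1 x y), Real.sq_sqrt (hW.1 x' y),
          sq_nonneg (√(W x y) - √(W x' y))]
    _ = 1 := by rw [← sum_div, sum_add_distrib, hW.2 x, hW.2 x']; norm_num

variable [NeZero q]

lemma sum_bhat_add (W : ZMod q → Y → ℝ) (v : ZMod q) : ∑ x, bhat W x (x + v) = q * Zv W v := by
  rw [Zv, ← mul_assoc, mul_one_div_cancel (NeZero.ne (q : ℝ)), one_mul]

lemma Zv_nonneg (W : ZMod q → Y → ℝ) (v : ZMod q) : 0 ≤ Zv W v :=
  mul_nonneg (by positivity) (sum_nonneg fun x _ => bhat_nonneg W x (x + v))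

lemma Zv_le_one (hW : IsDMC W) (v : ZMod q) : Zv W v ≤ 1 := by
  have hq : (0 : ℝ) < q := Nat.cast_pos.2 (NeZero.pos q)
  have h : ∑ x, bhat W x (x + v) ≤ q := by
    simpa using sum_le_sum fun x (_ : x ∈ univ) => bhat_le_one hW x (x + v)
  rw [sum_bhat_add] at h
  exact (mul_le_iff_le_one_right hq).1 h

lemma sqrt_Wminus_mul_le (hW : ∀ x y, 0 ≤ W x y) (a b : ZMod q) (y₁ y₂ : Y) :
    √(Wminus W a (y₁, y₂) * Wminus W b (y₁, y₂)) ≤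
      (1 / q) * ∑ u, ∑ u', √(W (a + u) y₁ * W (b + u') y₁) * √(W u y₂ * W u' y₂) := by
  simp only [Wminus]
  rw [mul_mul_mul_comm, Real.sqrt_mul (by positivity), Real.sqrt_mul_self (by positivity)]
  gcongr
  refine (Real.sqrt_sum_mul_sum_le _ _ (fun u => mul_nonneg (hW _ _) (hW _ _))
    (fun u => mul_nonneg (hW _ _) (hW _ _))).trans_eq ?_
  refine sum_congr rfl fun u _ => sum_congr rfl fun u' _ => ?_
  rw [← Real.sqrt_mul (mul_nonneg (hW _ _) (hW _ _))]
  ring_nf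

lemma bhat_Wminus_le (hW : ∀ x y, 0 ≤ W x y) (a b : ZMod q) :
    bhat (Wminus W) a b ≤ (1 / q) * ∑ u, ∑ u', bhat W (a + u) (b + u') * bhat W u u' := by
  calc bhat (Wminus W) a b
      ≤ ∑ y : Y × Y, (1 / q) * ∑ u, ∑ u',
          √(W (a + u) y.1 * W (b + u') y.1) * √(W u y.2 * W u' y.2) :=
        sum_le_sum fun y _ => sqrt_Wminus_mul_le hW a b y.1 y.2
    _ = (1 / q) * ∑ u, ∑ u', bhat W (a + u) (b + u') * bhat W u u' := by
        rw [← mul_sum, sum_comm]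
        congr 1
        refine sum_congr rfl fun u _ => ?_
        rw [sum_comm]
        simp only [bhat, sum_mul_sum, Fintype.sum_prod_type]

lemma Zv_Wminus_le (hW : ∀ x y, 0 ≤ W x y) (v : ZMod q) :
    Zv (Wminus W) v ≤ ∑ d, Zv W d * Zv W (v + d) := by
  have hq : (q : ℝ) ≠ 0 := NeZero.ne _
  have translate : ∀ u d : ZMod q,
      ∑ a, bhat W (a + u) (a + v + (u + d)) = q * Zv W (v + d) := fun u d => by
    rw [← sum_bhat_add, ← Equiv.sum_comp (Equiv.addRight u) fun x => bhat W x (x + (v + d))]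
    exact sum_congr rfl fun a _ => by rw [Equiv.coe_addRight, add_add_add_comm]
  calc Zv (Wminus W) v
      ≤ (1 / q) * ∑ a, (1 / q) * ∑ u, ∑ u', bhat W (a + u) (a + v + u') * bhat W u u' := by
        unfold Zv
        gcongr with a
        exact bhat_Wminus_le hW a (a + v)
    _ = (1 / q) ^ 2 * ∑ u, ∑ d, (∑ a, bhat W (a + u) (a + v + (u + d))) * bhat W u (u + d) := by
        simp only [← mul_sum, sum_mul]
        rw [← mul_assoc, ← sq, sum_comm]
        congr 1
        refine sum_congr rfl fun u _ => ?_
        rw [sum_comm, ← Equiv.sum_comp (Equiv.addLeft u)]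
        rfl
    _ = ∑ d, Zv W d * Zv W (v + d) := by
        simp only [translate, mul_assoc, ← mul_sum]
        rw [sum_comm]
        simp only [← mul_sum, sum_bhat_add]
        rw [mul_sum, mul_sum]
        refine sum_congr rfl fun d _ => ?_
        field_simp

end Bhattacharyya

section Divisibility

variable {n : ℕ} [NeZero n]

lemma card_filter_dvd_val {p : ℕ} (hp : p ∣ n) : #{d : ZMod n | p ∣ d.val} = n / p := by
  have : NeZero p := ⟨fun h => NeZero.ne n (zero_dvd_iff.1 (h ▸ hp))⟩
  let φ := (ZMod.castHom hp (ZMod p)).toAddMonoidHom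
  have hφ : ∀ d : ZMod n, φ d = 0 ↔ p ∣ d.val := fun d => by
    change (ZMod.cast d : ZMod p) = 0 ↔ _
    rw [ZMod.cast_eq_val, ZMod.natCast_eq_zero_iff]
  have hsurj : Function.Surjective φ := ZMod.castHom_surjective hp
  have hcard : n = p * #{d : ZMod n | φ d = 0} := by
    calc n = #(univ : Finset (ZMod n)) := by simp
      _ = ∑ y : ZMod p, #{d : ZMod n | φ d = y} := card_eq_sum_card_fiberwise fun _ _ => mem_univ _
      _ = p * #{d : ZMod n | φ d = 0} := by
        rw [sum_congr rfl fun y _ => AddMonoidHom.card_fiber_eq_of_mem_range φ (hsurj y) (hsurj 0)]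
        simp
  simp only [hφ] at hcard
  exact (Nat.div_eq_of_eq_mul_left (NeZero.pos p) (hcard.trans (mul_comm _ _))).symm

lemma dvd_val_add_iff {p : ℕ} (hp : p ∣ n) {v d : ZMod n} (hd : p ∣ d.val) :
    p ∣ (v + d).val ↔ p ∣ v.val := by
  rw [ZMod.val_add, Nat.dvd_mod_iff hp, Nat.dvd_add_left hd]

end Divisibility

lemma Finset.sum_eq_sum_range_sdiff_add {α M : Type*} [DecidableEq α] [AddCommMonoid M]
    (S : ℕ → Finset α) (hS : ∀ t, S (t + 1) ⊆ S t) (f : α → M) (j : ℕ) :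
    ∑ a ∈ S 0, f a = ∑ t ∈ range j, ∑ a ∈ S t \ S (t + 1), f a + ∑ a ∈ S j, f a := by
  induction j with
  | zero => simp
  | succ j ih => rw [ih, sum_range_succ, add_assoc, sum_sdiff (hS j)]

def twoPowMultiples (r s : ℕ) : Finset (ZMod (2 ^ r)) := {d | 2 ^ s ∣ d.val}

section TwoPowMultiples

variable {r s : ℕ}

lemma mem_twoPowMultiples {d : ZMod (2 ^ r)} : d ∈ twoPowMultiples r s ↔ 2 ^ s ∣ d.val := by
  simp [twoPowMultiples]

lemma twoPowMultiples_zero : twoPowMultiples r 0 = univ := by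
  ext d
  simp [mem_twoPowMultiples]

lemma twoPowMultiples_succ_subset : twoPowMultiples r (s + 1) ⊆ twoPowMultiples r s :=
  fun _ hd => mem_twoPowMultiples.2 ((pow_dvd_pow 2 s.le_succ).trans (mem_twoPowMultiples.1 hd))

lemma card_twoPowMultiples (hs : s ≤ r) : (#(twoPowMultiples r s) : ℝ) = 2 ^ r / 2 ^ s := by
  rw [twoPowMultiples, card_filter_dvd_val (pow_dvd_pow 2 hs), Nat.cast_div (pow_dvd_pow 2 hs)
    (by positivity)]
  push_cast
  rfl

lemma card_twoPowMultiples_sdiff (hs : s < r) :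
    (#(twoPowMultiples r s \ twoPowMultiples r (s + 1)) : ℝ) = 2 ^ r / 2 ^ (s + 1) := by
  rw [card_sdiff_of_subset twoPowMultiples_succ_subset,
    Nat.cast_sub (card_le_card twoPowMultiples_succ_subset), card_twoPowMultiples hs.le,
    card_twoPowMultiples hs, pow_succ]
  ring

lemma owt_of_mem_sdiff {d : ZMod (2 ^ r)}
    (hd : d ∈ twoPowMultiples r s \ twoPowMultiples r (s + 1)) :
    d ≠ 0 ∧ owt r d = r - s := by
  rw [mem_sdiff, mem_twoPowMultiples, mem_twoPowMultiples] at hd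
  obtain ⟨hs, hs'⟩ := hd
  have hval : d.val ≠ 0 := fun h => hs' (h ▸ dvd_zero _)
  refine ⟨fun h => hval (h ▸ ZMod.val_zero), ?_⟩
  have h₁ := (padicValNat_dvd_iff_le hval).1 hs
  have h₂ := mt (padicValNat_dvd_iff_le hval).2 hs'
  rw [owt]
  omega

lemma mem_sdiff_of_owt {j : ℕ} (hj : j < r) {v : ZMod (2 ^ r)} (hv : v ≠ 0) (hw : owt r v = r - j) :
    v ∈ twoPowMultiples r j \ twoPowMultiples r (j + 1) := by
  have hval : v.val ≠ 0 := (ZMod.val_ne_zero v).2 hv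
  have hlt : padicValNat 2 v.val < r := by
    have := Nat.le_of_dvd (Nat.pos_of_ne_zero hval) (pow_padicValNat_dvd (p := 2))
    exact (Nat.pow_lt_pow_iff_right (by norm_num)).1 (this.trans_lt (ZMod.val_lt v))
  have hj : padicValNat 2 v.val = j := by
    rw [owt] at hw
    omega
  rw [mem_sdiff, mem_twoPowMultiples, mem_twoPowMultiples, ← hj]
  exact ⟨pow_padicValNat_dvd, pow_succ_padicValNat_not_dvd hval⟩

end TwoPowMultiples

section Zmax

variable {r : ℕ} {Y : Type*} [Fintype Y] {W : ZMod (2 ^ r) → Y → ℝ}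

lemma Zmax_nonneg (W : ZMod (2 ^ r) → Y → ℝ) (i : ℕ) : 0 ≤ Zmax r W i :=
  Real.iSup_nonneg fun v => Zv_nonneg W v.1

lemma Zv_le_Zmax {d : ZMod (2 ^ r)} (hd : d ≠ 0) : Zv W d ≤ Zmax r W (owt r d) :=
  le_ciSup (f := fun v : {v : ZMod (2 ^ r) // v ≠ 0 ∧ owt r v = owt r d} => Zv W v.1)
    (Finite.bddAbove_range _) ⟨d, hd, rfl⟩

lemma sum_sdiff_twoPowMultiples_le (hW : IsDMC W) {t : ℕ} (ht : t < r) (v : ZMod (2 ^ r)) :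
    ∑ d ∈ twoPowMultiples r t \ twoPowMultiples r (t + 1), Zv W d * Zv W (v + d) ≤
      2 ^ r / 2 ^ (t + 1) * Zmax r W (r - t) := by
  rw [← card_twoPowMultiples_sdiff ht, ← nsmul_eq_mul]
  refine sum_le_card_nsmul _ _ _ fun d hd => ?_
  obtain ⟨hd0, hdw⟩ := owt_of_mem_sdiff hd
  calc Zv W d * Zv W (v + d) ≤ Zv W d := mul_le_of_le_one_right (Zv_nonneg W d) (Zv_le_one hW _)
    _ ≤ Zmax r W (r - t) := hdw ▸ Zv_le_Zmax hd0

lemma sum_twoPowMultiples_le (hW : IsDMC W) {j : ℕ} (hj : j < r) {v : ZMod (2 ^ r)}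
    (hv : v ∈ twoPowMultiples r j \ twoPowMultiples r (j + 1)) :
    ∑ d ∈ twoPowMultiples r j, Zv W d * Zv W (v + d) ≤ 2 ^ r / 2 ^ j * Zmax r W (r - j) := by
  rw [← card_twoPowMultiples hj.le, ← nsmul_eq_mul]
  refine sum_le_card_nsmul _ _ _ fun d hd => ?_
  rw [mem_sdiff, mem_twoPowMultiples, mem_twoPowMultiples] at hv
  rw [mem_twoPowMultiples] at hd
  by_cases hd' : 2 ^ (j + 1) ∣ d.val
  · have hvd : v + d ∈ twoPowMultiples r j \ twoPowMultiples r (j + 1) := by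
      rw [mem_sdiff, mem_twoPowMultiples, mem_twoPowMultiples,
        dvd_val_add_iff (pow_dvd_pow 2 hj.le) hd, dvd_val_add_iff (pow_dvd_pow 2 hj) hd']
      exact hv
    obtain ⟨hvd0, hvdw⟩ := owt_of_mem_sdiff hvd
    calc Zv W d * Zv W (v + d) ≤ Zv W (v + d) :=
          mul_le_of_le_one_left (Zv_nonneg W _) (Zv_le_one hW d)
      _ ≤ Zmax r W (r - j) := hvdw ▸ Zv_le_Zmax hvd0
  · obtain ⟨hd0, hdw⟩ := owt_of_mem_sdiff (s := j) (by
      rw [mem_sdiff, mem_twoPowMultiples, mem_twoPowMultiples]; exact ⟨hd, hd'⟩)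
    calc Zv W d * Zv W (v + d) ≤ Zv W d := mul_le_of_le_one_right (Zv_nonneg W d) (Zv_le_one hW _)
      _ ≤ Zmax r W (r - j) := hdw ▸ Zv_le_Zmax hd0

end Zmax

lemma Zv_Wminus_le_of_mem_sdiff {r : ℕ} {Y : Type*} [Fintype Y] {W : ZMod (2 ^ r) → Y → ℝ}
    (hW : IsDMC W) {j : ℕ} (hj : j < r) {v : ZMod (2 ^ r)}
    (hv : v ∈ twoPowMultiples r j \ twoPowMultiples r (j + 1)) :
    Zv (Wminus W) v ≤
      ∑ t ∈ range j, 2 ^ r / 2 ^ (t + 1) * Zmax r W (r - t) + 2 ^ r / 2 ^ j * Zmax r W (r - j) := by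
  calc Zv (Wminus W) v ≤ ∑ d, Zv W d * Zv W (v + d) := Zv_Wminus_le hW.1 v
    _ = ∑ t ∈ range j, ∑ d ∈ twoPowMultiples r t \ twoPowMultiples r (t + 1), Zv W d * Zv W (v + d)
          + ∑ d ∈ twoPowMultiples r j, Zv W d * Zv W (v + d) := by
        rw [← twoPowMultiples_zero]
        exact sum_eq_sum_range_sdiff_add _ (fun _ => twoPowMultiples_succ_subset) _ j
    _ ≤ _ := add_le_add
        (sum_le_sum fun t ht => sum_sdiff_twoPowMultiples_le hW ((mem_range.1 ht).trans hj) v)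
        (sum_twoPowMultiples_le hW hj hv)

theorem Zmax_minus_general_general (r : ℕ) {Y : Type*} [Fintype Y]
    (W : ZMod (2 ^ r) → Y → ℝ) (hW : IsDMC W) (j : ℕ) (hj1 : 1 ≤ j) (hj2 : j ≤ r - 1) :
    Zmax r (Wminus W) (r - j) ≤
      (∑ l ∈ Finset.Icc 1 j, ((2 ^ r : ℝ) / 2 ^ l) * Zmax r W (r - l + 1)) +
        ((2 ^ r : ℝ) / 2 ^ j) * Zmax r W (r - j) := by
  have hj : j < r := by omega
  have hreindex : ∑ l ∈ Icc 1 j, (2 ^ r : ℝ) / 2 ^ l * Zmax r W (r - l + 1) =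
      ∑ t ∈ range j, 2 ^ r / 2 ^ (t + 1) * Zmax r W (r - t) := by
    rw [← Ico_add_one_right_eq_Icc, sum_Ico_eq_sum_range]
    refine sum_congr rfl fun t ht => ?_
    rw [mem_range] at ht
    rw [add_comm 1 t, show r - (t + 1) + 1 = r - t by omega]
  rw [hreindex]
  refine Real.iSup_le (fun ⟨v, hv0, hvw⟩ =>
    Zv_Wminus_le_of_mem_sdiff hW hj (mem_sdiff_of_owt hj hv0 hvw)) ?_
  exact add_nonneg (sum_nonneg fun t _ => mul_nonneg (by positivity) (Zmax_nonneg W _))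
    (mul_nonneg (by positivity) (Zmax_nonneg W _))

/-- for `1 ≤ j ≤ r-1`,
`Z_max^{(r-j)}(W⁻) ≤ ∑_{l=1}^{j} (q/2^l) Z_max^{(r-l+1)}(W) + (q/2^j) Z_max^{(r-j)}(W)`. -/
theorem Zmax_minus_general (r : ℕ) (hr : 2 ≤ r) {Y : Type*} [Fintype Y] [Nonempty Y]
    (W : ZMod (2 ^ r) → Y → ℝ) (hW : IsDMC W) (j : ℕ) (hj1 : 1 ≤ j) (hj2 : j ≤ r - 1) :
    Zmax r (Wminus W) (r - j) ≤
      (∑ l ∈ Finset.Icc 1 j, ((2 ^ r : ℝ) / 2 ^ l) * Zmax r W (r - l + 1)) +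
        ((2 ^ r : ℝ) / 2 ^ j) * Zmax r W (r - j) :=
  Zmax_minus_general_general r W hW j hj1 hj2
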